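/- arXiv:2508.00522 — 3 statements merged into one kernel-verified Lean document; each statement's English description precedes it below -/
import Mathlib

section
/- Let L : ℝ^{n×m} → ℝ be differentiable, and let ρ > 0 and s > 0. Let x : ℝ → ℝ^n and y : ℝ → ℝ^m be differentiable curves such that for all t, y_t ≠ 0 and G_t := ∇L(x_t y_tᵀ) ≠ 0. Define the perturbed point x̃_t := x_t + (ρ/s)·‖y_t‖⁻²·(G_t/‖G_t‖_F)·y_t and ỹ_t := y_t, let G̃_t := ∇L(x̃_t ỹ_tᵀ), and suppose the curves follow the limiting flow of Flat-LoRA: dx_t/dt = −G̃_t ỹ_t and dy_t/dt = −G̃_tᵀ x̃_t. Then the balancedness B_t := (1/2)(‖x_t‖² − ‖y_t‖²) satisfies |dB_t/dt| ≤ (ρ/s)·‖y_t‖⁻¹·‖G̃_t y_t‖ for all t. -/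
/-!
Along the flow, `d/dt ½‖x‖² = -⟪x, G̃ y⟫` and `d/dt ½‖y‖² = -⟪y, G̃ᵀ x̃⟫ = -⟪G̃ y, x̃⟫`. Since
`x̃ = x + c • G y` with `c = (ρ/s) ‖y‖⁻² ‖G‖_F⁻¹`, the two rates cancel up to the perturbation,
so `dB/dt = c ⟪G̃ y, G y⟫`. Cauchy–Schwarz and `‖G y‖ ≤ ‖G‖_F ‖y‖` then bound this by
`(ρ/s) ‖y‖⁻¹ ‖G̃ y‖`.
-/

/- Frobenius norm / normed-space structure on matrices, matching the paper's
   Frobenius inner product convention. -/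
attribute [local instance] Matrix.frobeniusNormedAddCommGroup Matrix.frobeniusNormedSpace

open scoped BigOperators

/-- Matrix–vector product landing in Euclidean space. -/
noncomputable def mulVecE {n m : ℕ} (G : Matrix (Fin n) (Fin m) ℝ)
    (y : EuclideanSpace ℝ (Fin m)) : EuclideanSpace ℝ (Fin n) :=
  (WithLp.equiv 2 (Fin n → ℝ)).symm (G.mulVec y)

/-- Transposed matrix–vector product `Gᵀ x` landing in Euclidean space. -/
noncomputable def vecMulE {n m : ℕ} (G : Matrix (Fin n) (Fin m) ℝ)
    (x : EuclideanSpace ℝ (Fin n)) : EuclideanSpace ℝ (Fin m) :=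
  (WithLp.equiv 2 (Fin m → ℝ)).symm (G.transpose.mulVec x)

/-- Outer product `x yᵀ` of two Euclidean vectors. -/
noncomputable def outerE {n m : ℕ} (x : EuclideanSpace ℝ (Fin n))
    (y : EuclideanSpace ℝ (Fin m)) : Matrix (Fin n) (Fin m) ℝ :=
  Matrix.of fun i j => x i * y j

/-- Frobenius norm of a matrix, written explicitly. -/
noncomputable def frobNorm {n m : ℕ} (G : Matrix (Fin n) (Fin m) ℝ) : ℝ :=
  Real.sqrt (∑ i, ∑ j, (G i j) ^ 2)

open Matrix

section Euclidean

variable {n m : ℕ}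

lemma frobNorm_eq_norm (G : Matrix (Fin n) (Fin m) ℝ) : frobNorm G = ‖G‖ := by
  rw [frobNorm, frobenius_norm_def, Real.sqrt_eq_rpow]
  simp only [one_div, Real.norm_eq_abs, Real.rpow_ofNat, sq_abs]

lemma norm_mulVecE_le (G : Matrix (Fin n) (Fin m) ℝ) (y : EuclideanSpace ℝ (Fin m)) :
    ‖mulVecE G y‖ ≤ ‖G‖ * ‖y‖ := by
  have := frobenius_norm_mul G (replicateCol Unit (WithLp.ofLp y))
  rwa [← replicateCol_mulVec, frobenius_norm_replicateCol, frobenius_norm_replicateCol] at this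

lemma inner_vecMulE (G : Matrix (Fin n) (Fin m) ℝ)
    (x : EuclideanSpace ℝ (Fin n)) (y : EuclideanSpace ℝ (Fin m)) :
    inner ℝ (vecMulE G x) y = inner ℝ (mulVecE G y) x := by
  simp only [vecMulE, mulVecE, WithLp.equiv_symm_apply]
  rw [EuclideanSpace.inner_toLp_toLp]
  exact dotProduct_transpose_mulVec G _ _

lemma inner_sub_inner_flatLoRA_velocity (G Gtil : Matrix (Fin n) (Fin m) ℝ)
    (x : EuclideanSpace ℝ (Fin n)) (y : EuclideanSpace ℝ (Fin m)) (c : ℝ) :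
    inner ℝ x (-mulVecE Gtil y) - inner ℝ y (-vecMulE Gtil (x + c • mulVecE G y))
      = c * inner ℝ (mulVecE Gtil y) (mulVecE G y) := by
  rw [inner_neg_right, inner_neg_right, real_inner_comm _ y, inner_vecMulE, inner_add_right,
    real_inner_smul_right, real_inner_comm _ x]
  ring

lemma abs_mul_inner_mulVecE_le (G : Matrix (Fin n) (Fin m) ℝ)
    (g : EuclideanSpace ℝ (Fin n)) (y : EuclideanSpace ℝ (Fin m)) {r : ℝ} (hr : 0 ≤ r) :
    |r * (‖y‖ ^ 2)⁻¹ * ‖G‖⁻¹ * inner ℝ g (mulVecE G y)| ≤ r * ‖y‖⁻¹ * ‖g‖ := by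
  calc _ = r * (‖y‖ ^ 2)⁻¹ * ‖G‖⁻¹ * |inner ℝ g (mulVecE G y)| := by
        rw [abs_mul, abs_of_nonneg (by positivity)]
    _ ≤ r * (‖y‖ ^ 2)⁻¹ * ‖G‖⁻¹ * (‖g‖ * (‖G‖ * ‖y‖)) := by
        gcongr
        exact (abs_real_inner_le_norm _ _).trans (by gcongr; exact norm_mulVecE_le G y)
    _ = r * ‖y‖⁻¹ * ‖g‖ * ((‖y‖⁻¹ * ‖y‖) * (‖G‖⁻¹ * ‖G‖)) := by ring
    _ ≤ r * ‖y‖⁻¹ * ‖g‖ :=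
        mul_le_of_le_one_right (by positivity)
          (mul_le_one₀ inv_mul_le_one (by positivity) inv_mul_le_one)

end Euclidean

lemma hasDerivAt_half_norm_sq_sub_norm_sq {E F : Type*}
    [NormedAddCommGroup E] [InnerProductSpace ℝ E] [NormedAddCommGroup F] [InnerProductSpace ℝ F]
    {x : ℝ → E} {y : ℝ → F} {x' : E} {y' : F} {t : ℝ}
    (hx : HasDerivAt x x' t) (hy : HasDerivAt y y' t) :
    HasDerivAt (fun u => (1 / 2 : ℝ) * (‖x u‖ ^ 2 - ‖y u‖ ^ 2))
      (inner ℝ (x t) x' - inner ℝ (y t) y') t :=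
  ((hx.norm_sq.sub hy.norm_sq).const_mul (1 / 2 : ℝ)).congr_deriv (by ring)

theorem flatLoRA_balancedness_general {n m : ℕ}
    (ρ s : ℝ) (hρ : 0 < ρ) (hs : 0 < s)
    (x : ℝ → EuclideanSpace ℝ (Fin n)) (y : ℝ → EuclideanSpace ℝ (Fin m))
    (G Gtil : ℝ → Matrix (Fin n) (Fin m) ℝ)
    (xtil : ℝ → EuclideanSpace ℝ (Fin n))
    -- the perturbed point `x̃_t = x_t + (ρ/s)‖y_t‖⁻² (G_t/‖G_t‖_F) y_t`, `ỹ_t = y_t`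
    (hxtil : ∀ t, xtil t =
      x t + ((ρ / s) * (‖y t‖ ^ 2)⁻¹ * (frobNorm (G t))⁻¹) • mulVecE (G t) (y t))
    -- the limiting flow of Flat-LoRA
    (hx' : ∀ t, HasDerivAt x (-(mulVecE (Gtil t) (y t))) t)
    (hy' : ∀ t, HasDerivAt y (-(vecMulE (Gtil t) (xtil t))) t) :
    ∀ t, |deriv (fun u => (1 / 2 : ℝ) * (‖x u‖ ^ 2 - ‖y u‖ ^ 2)) t|
      ≤ (ρ / s) * ‖y t‖⁻¹ * ‖mulVecE (Gtil t) (y t)‖ := by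
  intro t
  rw [(hasDerivAt_half_norm_sq_sub_norm_sq (hx' t) (hy' t)).deriv, hxtil t,
    inner_sub_inner_flatLoRA_velocity, frobNorm_eq_norm]
  exact abs_mul_inner_mulVecE_le _ _ _ (div_pos hρ hs).le

/-- **Theorem 1 (Balancedness of Flat-LoRA).**
Under the limiting flow of Flat-LoRA, the balancedness
`B_t = (1/2)(‖x_t‖² − ‖y_t‖²)` satisfies
`|dB_t/dt| ≤ (ρ/s) ‖y_t‖⁻¹ ‖G̃_t y_t‖`. -/
theorem flatLoRA_balancedness {n m : ℕ}
    (L : Matrix (Fin n) (Fin m) ℝ → ℝ) (hL : Differentiable ℝ L)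
    (ρ s : ℝ) (hρ : 0 < ρ) (hs : 0 < s)
    (x : ℝ → EuclideanSpace ℝ (Fin n)) (y : ℝ → EuclideanSpace ℝ (Fin m))
    (G Gtil : ℝ → Matrix (Fin n) (Fin m) ℝ)
    (xtil : ℝ → EuclideanSpace ℝ (Fin n))
    (hy : ∀ t, y t ≠ 0) (hGne : ∀ t, G t ≠ 0)
    -- `G t` is the gradient of `L` at `x_t y_tᵀ` (Frobenius inner product convention)
    (hG : ∀ t H, fderiv ℝ L (outerE (x t) (y t)) H = ∑ i, ∑ j, G t i j * H i j)
    -- the perturbed point `x̃_t = x_t + (ρ/s)‖y_t‖⁻² (G_t/‖G_t‖_F) y_t`, `ỹ_t = y_t`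
    (hxtil : ∀ t, xtil t =
      x t + ((ρ / s) * (‖y t‖ ^ 2)⁻¹ * (frobNorm (G t))⁻¹) • mulVecE (G t) (y t))
    -- `G̃_t` is the gradient of `L` at `x̃_t ỹ_tᵀ`
    (hGtil : ∀ t H, fderiv ℝ L (outerE (xtil t) (y t)) H = ∑ i, ∑ j, Gtil t i j * H i j)
    -- the limiting flow of Flat-LoRA
    (hx' : ∀ t, HasDerivAt x (-(mulVecE (Gtil t) (y t))) t)
    (hy' : ∀ t, HasDerivAt y (-(vecMulE (Gtil t) (xtil t))) t) :
    ∀ t, |deriv (fun u => (1 / 2 : ℝ) * (‖x u‖ ^ 2 - ‖y u‖ ^ 2)) t|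
      ≤ (ρ / s) * ‖y t‖⁻¹ * ‖mulVecE (Gtil t) (y t)‖ :=
  flatLoRA_balancedness_general ρ s hρ hs x y G Gtil xtil hxtil hx' hy'
end

section
/- Let L : ℝ^{n×m} → ℝ be differentiable, and let ρ > 0 and s > 0. Let x : ℝ → ℝ^n and y : ℝ → ℝ^m be differentiable curves such that for all t, y_t ≠ 0 and G_t := ∇L(x_t y_tᵀ) ≠ 0. Define x̃_t := x_t + (ρ/s)·‖y_t‖⁻²·(G_t/‖G_t‖_F)·y_t and ỹ_t := y_t, let G̃_t := ∇L(x̃_t ỹ_tᵀ), and suppose dx_t/dt = −G̃_t ỹ_t and dy_t/dt = −G̃_tᵀ x̃_t. Then the balancedness B_t := (1/2)(‖x_t‖² − ‖y_t‖²) satisfies the exact identity dB_t/dt = (ρ/(s·‖y_t‖²))·⟨(G_t/‖G_t‖_F)·y_t, G̃_t·y_t⟩, where ⟨·,·⟩ is the Euclidean inner product on ℝ^n. -/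
attribute [local instance] Matrix.frobeniusNormedAddCommGroup Matrix.frobeniusNormedSpace

open scoped BigOperators RealInnerProductSpace

section Balancedness

variable {E F : Type*} [NormedAddCommGroup E] [InnerProductSpace ℝ E]
  [NormedAddCommGroup F] [InnerProductSpace ℝ F]

noncomputable def balancedness (x : E) (y : F) : ℝ := (1 / 2) * (‖x‖ ^ 2 - ‖y‖ ^ 2)

theorem HasDerivAt.balancedness {x : ℝ → E} {y : ℝ → F} {x' : E} {y' : F} {t : ℝ}
    (hx : HasDerivAt x x' t) (hy : HasDerivAt y y' t) :
    HasDerivAt (fun u => balancedness (x u) (y u)) (⟪x t, x'⟫ - ⟪y t, y'⟫) t :=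
  ((hx.norm_sq.sub hy.norm_sq).const_mul (1 / 2 : ℝ)).congr_deriv (by ring)

end Balancedness

theorem inner_vecMulE_left {n m : ℕ} (G : Matrix (Fin n) (Fin m) ℝ)
    (x : EuclideanSpace ℝ (Fin n)) (y : EuclideanSpace ℝ (Fin m)) :
    ⟪vecMulE G x, y⟫ = ⟪x, mulVecE G y⟫ := by
  simp only [vecMulE, mulVecE, PiLp.inner_apply, WithLp.equiv_symm_apply,
    Matrix.mulVec, dotProduct, Matrix.transpose_apply, RCLike.inner_apply, conj_trivial,
    Finset.sum_mul, Finset.mul_sum]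
  rw [Finset.sum_comm]
  exact Finset.sum_congr rfl fun i _ => Finset.sum_congr rfl fun j _ => by ring

/-- Along the flow `ẋ = -G̃ y`, `ẏ = -G̃ᵀ x̃` the terms `⟪x, G̃ y⟫` cancel, and only the
displacement `x̃ - x` of the perturbed point drives the balancedness. -/
theorem hasDerivAt_balancedness_of_perturbed_flow {n m : ℕ}
    {x : ℝ → EuclideanSpace ℝ (Fin n)} {y : ℝ → EuclideanSpace ℝ (Fin m)}
    {xtil : EuclideanSpace ℝ (Fin n)} {Gtil : Matrix (Fin n) (Fin m) ℝ} {t : ℝ}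
    (hx : HasDerivAt x (-mulVecE Gtil (y t)) t) (hy : HasDerivAt y (-vecMulE Gtil xtil) t) :
    HasDerivAt (fun u => balancedness (x u) (y u)) ⟪xtil - x t, mulVecE Gtil (y t)⟫ t := by
  refine (hx.balancedness hy).congr_deriv ?_
  rw [inner_neg_right, inner_neg_right, real_inner_comm _ (y t), inner_vecMulE_left,
    inner_sub_left]
  ring

theorem flatLoRA_balancedness_identity_general {n m : ℕ}
    (ρ s : ℝ)
    (x : ℝ → EuclideanSpace ℝ (Fin n)) (y : ℝ → EuclideanSpace ℝ (Fin m))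
    (G Gtil : ℝ → Matrix (Fin n) (Fin m) ℝ)
    (xtil : ℝ → EuclideanSpace ℝ (Fin n))
    -- the perturbed point `x̃_t = x_t + (ρ/s)‖y_t‖⁻² (G_t/‖G_t‖_F) y_t`, `ỹ_t = y_t`
    (hxtil : ∀ t, xtil t =
      x t + ((ρ / s) * (‖y t‖ ^ 2)⁻¹ * (frobNorm (G t))⁻¹) • mulVecE (G t) (y t))
    -- the limiting flow of Flat-LoRA
    (hx' : ∀ t, HasDerivAt x (-(mulVecE (Gtil t) (y t))) t)
    (hy' : ∀ t, HasDerivAt y (-(vecMulE (Gtil t) (xtil t))) t) :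
    ∀ t, deriv (fun u => (1 / 2 : ℝ) * (‖x u‖ ^ 2 - ‖y u‖ ^ 2)) t
      = (ρ / (s * ‖y t‖ ^ 2)) *
        ⟪(frobNorm (G t))⁻¹ • mulVecE (G t) (y t), mulVecE (Gtil t) (y t)⟫ := by
  intro t
  change deriv (fun u => balancedness (x u) (y u)) t = _
  have hdisp : xtil t - x t =
      ((ρ / s) * (‖y t‖ ^ 2)⁻¹ * (frobNorm (G t))⁻¹) • mulVecE (G t) (y t) := by
    rw [hxtil t, add_sub_cancel_left]
  rw [(hasDerivAt_balancedness_of_perturbed_flow (hx' t) (hy' t)).deriv, hdisp,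
    real_inner_smul_left, real_inner_smul_left]
  ring

/-- **Key identity in the proof of Theorem 1.** Under the limiting flow of Flat-LoRA,
`dB_t/dt = (ρ/(s‖y_t‖²)) ⟪(G_t/‖G_t‖_F) y_t, G̃_t y_t⟫`. -/
theorem flatLoRA_balancedness_identity {n m : ℕ}
    (L : Matrix (Fin n) (Fin m) ℝ → ℝ) (hL : Differentiable ℝ L)
    (ρ s : ℝ) (hρ : 0 < ρ) (hs : 0 < s)
    (x : ℝ → EuclideanSpace ℝ (Fin n)) (y : ℝ → EuclideanSpace ℝ (Fin m))
    (G Gtil : ℝ → Matrix (Fin n) (Fin m) ℝ)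
    (xtil : ℝ → EuclideanSpace ℝ (Fin n))
    (hy : ∀ t, y t ≠ 0) (hGne : ∀ t, G t ≠ 0)
    -- `G t` is the gradient of `L` at `x_t y_tᵀ` (Frobenius inner product convention)
    (hG : ∀ t H, fderiv ℝ L (outerE (x t) (y t)) H = ∑ i, ∑ j, G t i j * H i j)
    -- the perturbed point `x̃_t = x_t + (ρ/s)‖y_t‖⁻² (G_t/‖G_t‖_F) y_t`, `ỹ_t = y_t`
    (hxtil : ∀ t, xtil t =
      x t + ((ρ / s) * (‖y t‖ ^ 2)⁻¹ * (frobNorm (G t))⁻¹) • mulVecE (G t) (y t))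
    -- `G̃_t` is the gradient of `L` at `x̃_t ỹ_tᵀ`
    (hGtil : ∀ t H, fderiv ℝ L (outerE (xtil t) (y t)) H = ∑ i, ∑ j, Gtil t i j * H i j)
    -- the limiting flow of Flat-LoRA
    (hx' : ∀ t, HasDerivAt x (-(mulVecE (Gtil t) (y t))) t)
    (hy' : ∀ t, HasDerivAt y (-(vecMulE (Gtil t) (xtil t))) t) :
    ∀ t, deriv (fun u => (1 / 2 : ℝ) * (‖x u‖ ^ 2 - ‖y u‖ ^ 2)) t
      = (ρ / (s * ‖y t‖ ^ 2)) *
        ⟪(frobNorm (G t))⁻¹ • mulVecE (G t) (y t), mulVecE (Gtil t) (y t)⟫ :=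
  flatLoRA_balancedness_identity_general ρ s x y G Gtil xtil hxtil hx' hy'
end

section
/- Let s ≠ 0, W₀ ∈ ℝ^{n×m}, B ∈ ℝ^{n×r}, and A ∈ ℝ^{r×m} with A·Aᵀ invertible, and let A⁺ := Aᵀ·(A·Aᵀ)⁻¹. Suppose the full-space perturbation E^W ∈ ℝ^{n×m} satisfies E^W = M·A for some M ∈ ℝ^{n×r} (its rows lie in the row space of A). Define the low-rank perturbation E^B := (1/s)·E^W·A⁺ on the matrix B, with no perturbation on A. Then W₀ + s·(B + E^B)·A = W₀ + s·B·A + E^W, and consequently for every function L : ℝ^{n×m} → ℝ, the perturbed low-rank loss equals the perturbed full-space loss: L(W₀ + s·(B + E^B)·A) = L(W₀ + s·B·A + E^W). -/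
/-! `A⁺ = Aᵀ(AAᵀ)⁻¹` is a right inverse of `A`, so `A⁺A` fixes every matrix `M·A` whose rows lie in
the row space of `A`; hence `s·((1/s)·E·A⁺)·A = E`, and the low-rank update reproduces the full one. -/

open Matrix

namespace Matrix

theorem mul_transpose_mul_inv_eq_one {R r m : Type*} [CommRing R] [Fintype r] [DecidableEq r]
    [Fintype m] (A : Matrix r m R) [Invertible (A * Aᵀ)] : A * (Aᵀ * (A * Aᵀ)⁻¹) = 1 := by
  rw [← Matrix.mul_assoc, mul_inv_of_invertible]

theorem add_smul_mul_eq_of_mul_eq_one {K n m r : Type*} [Field K] [Fintype r] [DecidableEq r]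
    [Fintype m] {s : K} (hs : s ≠ 0) {A : Matrix r m K} {X : Matrix m r K} (hX : A * X = 1)
    (W₀ : Matrix n m K) (B M : Matrix n r K) :
    W₀ + s • ((B + (1 / s) • (M * A * X)) * A) = W₀ + s • (B * A) + M * A := by
  have hproj : M * A * X * A = M * A := by rw [Matrix.mul_assoc M, hX, Matrix.mul_one]
  rw [Matrix.add_mul, smul_add, Matrix.smul_mul, hproj, smul_smul, mul_one_div_cancel hs, one_smul, add_assoc]

end Matrix

/-- **Perturbation transfer (Eqs. (14)–(15)).** If the full-space perturbation
`E^W = M·A` has its rows in the row space of `A` (with `A·Aᵀ` invertible and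
`A⁺ = Aᵀ(AAᵀ)⁻¹`), then the low-rank perturbation `E^B = (1/s)·E^W·A⁺` on `B`
reproduces exactly the same perturbed weight, hence the same perturbed loss for
every loss function `L`. -/
theorem lora_perturbation_transfer {n m r : ℕ}
    (s : ℝ) (hs : s ≠ 0)
    (W₀ : Matrix (Fin n) (Fin m) ℝ) (B : Matrix (Fin n) (Fin r) ℝ)
    (A : Matrix (Fin r) (Fin m) ℝ) [Invertible (A * Aᵀ)]
    (EW : Matrix (Fin n) (Fin m) ℝ) (M : Matrix (Fin n) (Fin r) ℝ)
    (hEW : EW = M * A) :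
    W₀ + s • ((B + (1 / s) • (EW * (Aᵀ * (A * Aᵀ)⁻¹))) * A)
        = W₀ + s • (B * A) + EW ∧
    ∀ L : Matrix (Fin n) (Fin m) ℝ → ℝ,
      L (W₀ + s • ((B + (1 / s) • (EW * (Aᵀ * (A * Aᵀ)⁻¹))) * A))
        = L (W₀ + s • (B * A) + EW) := by
  subst hEW
  have hweight := add_smul_mul_eq_of_mul_eq_one hs (mul_transpose_mul_inv_eq_one A) W₀ B M
  exact ⟨hweight, fun L => congrArg L hweight⟩
end
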